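/- arXiv:2604.21805 — 2 statements merged into one kernel-verified Lean document; each statement's English description precedes it below -/
import Mathlib

section
/- Maximal ambiguity for finite time: let n ≥ 1, let H_r and H_{r'} be finite-dimensional Hilbert spaces of equal dimension, and let U_r, U_{r'} be unitaries on them with U_r^n = I and U_{r'}^n = I. Let U = X_n ⊗ U_r and U' = X_n ⊗ U_{r'} on ℂⁿ⊗H_r and ℂⁿ⊗H_{r'}. Then for any unit vectors ψ(0) ∈ H_r and ψ'(0) ∈ H_{r'}, there exists a unitary S : ℂⁿ⊗H_r → ℂⁿ⊗H_{r'} with S U S⁻¹ = U' and S(|τ⟩⊗U_r^τ ψ(0)) = |τ⟩⊗U_{r'}^τ ψ'(0) for all τ ∈ ℤ/nℤ. -/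
open scoped ComplexOrder

/-- The basis vector `|τ⟩ ⊗ v` of `ℂⁿ ⊗ H_r`, modelled as the element of
`PiLp 2 (fun _ : ZMod n => H_r)` supported at `τ` with value `v`. -/
noncomputable def basisTensor {n : ℕ} [NeZero n] {Hr : Type*} [NormedAddCommGroup Hr]
    [InnerProductSpace ℂ Hr] (τ : ZMod n) (v : Hr) : PiLp 2 (fun _ : ZMod n => Hr) :=
  (WithLp.equiv 2 (∀ _ : ZMod n, Hr)).symm (Pi.single τ v)

/-- If `G ^ n = 1` then powers of `G` only depend on the exponent mod `n`. -/
lemma pow_congr_zmod {M : Type*} [Monoid M] {G : M} {n : ℕ} [NeZero n]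
    (hG : G ^ n = 1) {a b : ℕ} (h : (a : ZMod n) = (b : ZMod n)) : G ^ a = G ^ b := by
  have key : ∀ m : ℕ, G ^ m = G ^ (m % n) := fun m => by
    conv_lhs => rw [← Nat.div_add_mod m n]
    rw [pow_add, pow_mul, hG, one_pow, one_mul]
  have hm : a % n = b % n := (ZMod.natCast_eq_natCast_iff a b n).mp h
  rw [key a, key b, hm]

/-- There is a unitary mapping any given unit vector to any given unit vector, between
finite-dimensional spaces of equal dimension. -/
lemma exists_isometryEquiv_map_unit {Hr Hr' : Type*} [NormedAddCommGroup Hr]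
    [InnerProductSpace ℂ Hr] [NormedAddCommGroup Hr'] [InnerProductSpace ℂ Hr']
    [FiniteDimensional ℂ Hr] [FiniteDimensional ℂ Hr']
    (hdim : Module.finrank ℂ Hr = Module.finrank ℂ Hr')
    (ψ0 : Hr) (ψ0' : Hr') (hψ0 : ‖ψ0‖ = 1) (hψ0' : ‖ψ0'‖ = 1) :
    ∃ W : Hr ≃ₗᵢ[ℂ] Hr', W ψ0 = ψ0' := by
  set d := Module.finrank ℂ Hr with hd
  have hψ0ne : ψ0 ≠ 0 := by intro h; rw [h, norm_zero] at hψ0; norm_num at hψ0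
  have hdpos : 0 < d := Module.finrank_pos_iff_exists_ne_zero.mpr ⟨ψ0, hψ0ne⟩
  haveI : NeZero d := ⟨hdpos.ne'⟩
  have hon : Orthonormal ℂ (Set.restrict {(0 : Fin d)} (fun _ => ψ0)) := by
    constructor
    · intro i; exact hψ0
    · intro i j hij
      exact absurd (Subtype.ext (by
        have hi := i.2; have hj := j.2
        simp only [Set.mem_singleton_iff] at hi hj
        rw [hi, hj])) hij
  have hon' : Orthonormal ℂ (Set.restrict {(0 : Fin d)} (fun _ => ψ0')) := by
    constructor
    · intro i; exact hψ0'
    · intro i j hij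
      exact absurd (Subtype.ext (by
        have hi := i.2; have hj := j.2
        simp only [Set.mem_singleton_iff] at hi hj
        rw [hi, hj])) hij
  obtain ⟨b, hb⟩ := hon.exists_orthonormalBasis_extension_of_card_eq (by simp; exact hd.symm)
  obtain ⟨b', hb'⟩ := hon'.exists_orthonormalBasis_extension_of_card_eq (by simp [← hdim])
  refine ⟨b.repr.trans b'.repr.symm, ?_⟩
  have h0 : ψ0 = b 0 := (hb 0 rfl).symm
  have h0' : ψ0' = b' 0 := (hb' 0 rfl).symm
  simp [h0, h0', LinearIsometryEquiv.trans_apply, OrthonormalBasis.repr_self,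
    OrthonormalBasis.repr_symm_single]

/-- maximal ambiguity, finite time: let `n ≥ 1`, `H_r, H_{r'}`
finite-dimensional Hilbert spaces of equal dimension, and `U_r, U_{r'}` unitaries with
`U_rⁿ = 1`, `U_{r'}ⁿ = 1`.  Let `U = X_n ⊗ U_r` and `U' = X_n ⊗ U_{r'}` (so that
`(U f)(τ) = U_r (f (τ-1))`).  Then for any unit vectors `ψ(0), ψ'(0)` there is a unitary
`S : ℂⁿ⊗H_r → ℂⁿ⊗H_{r'}` with `S U S⁻¹ = U'` and
`S(|τ⟩ ⊗ U_r^τ ψ(0)) = |τ⟩ ⊗ U_{r'}^τ ψ'(0)` for all `τ ∈ ℤ/nℤ`. -/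
theorem maximal_ambiguity_finite_time
    (n : ℕ) [NeZero n]
    {Hr Hr' : Type*} [NormedAddCommGroup Hr] [InnerProductSpace ℂ Hr]
    [NormedAddCommGroup Hr'] [InnerProductSpace ℂ Hr']
    [FiniteDimensional ℂ Hr] [FiniteDimensional ℂ Hr']
    (hdim : Module.finrank ℂ Hr = Module.finrank ℂ Hr')
    (Ur : Hr ≃ₗᵢ[ℂ] Hr) (Ur' : Hr' ≃ₗᵢ[ℂ] Hr')
    (hUr : Ur ^ n = 1) (hUr' : Ur' ^ n = 1)
    (ψ0 : Hr) (ψ0' : Hr') (hψ0 : ‖ψ0‖ = 1) (hψ0' : ‖ψ0'‖ = 1) :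
    ∃ S : PiLp 2 (fun _ : ZMod n => Hr) ≃ₗᵢ[ℂ] PiLp 2 (fun _ : ZMod n => Hr'),
      (∀ f g : PiLp 2 (fun _ : ZMod n => Hr),
        (∀ τ : ZMod n,
            WithLp.equiv 2 (∀ _ : ZMod n, Hr) g τ
              = Ur (WithLp.equiv 2 (∀ _ : ZMod n, Hr) f (τ - 1))) →
        (∀ τ : ZMod n,
            WithLp.equiv 2 (∀ _ : ZMod n, Hr') (S g) τ
              = Ur' (WithLp.equiv 2 (∀ _ : ZMod n, Hr') (S f) (τ - 1)))) ∧
      (∀ τ : ZMod n,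
        S (basisTensor τ ((Ur ^ τ.val) ψ0)) = basisTensor τ ((Ur' ^ τ.val) ψ0')) := by
  obtain ⟨W, hW⟩ := exists_isometryEquiv_map_unit hdim ψ0 ψ0' hψ0 hψ0'
  set e : ZMod n → (Hr ≃ₗᵢ[ℂ] Hr') :=
    fun τ => ((Ur ^ (n - τ.val)).trans W).trans (Ur' ^ τ.val) with he
  refine ⟨LinearIsometryEquiv.piLpCongrRight 2 e, ?_, ?_⟩
  · intro f g h τ
    simp only [LinearIsometryEquiv.piLpCongrRight_apply, WithLp.equiv_apply,
      PiLp.toLp_apply]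
    simp only [WithLp.equiv_apply] at h
    rw [h τ]
    set x := f (τ - 1) with hx
    have hvallt : ∀ σ : ZMod n, σ.val ≤ n := fun σ => (ZMod.val_lt σ).le
    have hA : (Ur ^ (n - τ.val)) (Ur x) = (Ur ^ (n - (τ - 1).val)) x := by
      have hpow : Ur ^ (n - τ.val + 1) = Ur ^ (n - (τ - 1).val) := by
        apply pow_congr_zmod hUr
        push_cast [Nat.cast_sub (hvallt τ), Nat.cast_sub (hvallt (τ - 1))]
        rw [ZMod.natCast_val, ZMod.natCast_val, ZMod.natCast_self, ZMod.cast_id, ZMod.cast_id]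
        ring
      calc (Ur ^ (n - τ.val)) (Ur x) = (Ur ^ (n - τ.val + 1)) x := by
            simp [pow_succ, LinearIsometryEquiv.coe_mul]
        _ = (Ur ^ (n - (τ - 1).val)) x := by rw [hpow]
    have hB : ∀ y : Hr', Ur' ((Ur' ^ (τ - 1).val) y) = (Ur' ^ τ.val) y := by
      intro y
      have hpow : Ur' ^ ((τ - 1).val + 1) = Ur' ^ τ.val := by
        apply pow_congr_zmod hUr'
        push_cast
        rw [ZMod.natCast_val, ZMod.natCast_val, ZMod.cast_id, ZMod.cast_id]
        ring
      calc Ur' ((Ur' ^ (τ - 1).val) y) = (Ur' ^ ((τ - 1).val + 1)) y := by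
            simp [pow_succ', LinearIsometryEquiv.coe_mul]
        _ = (Ur' ^ τ.val) y := by rw [hpow]
    simp only [he, LinearIsometryEquiv.trans_apply]
    rw [hA, hB]
  · intro τ
    rw [basisTensor, basisTensor, WithLp.equiv_symm_apply, WithLp.equiv_symm_apply,
      PiLp.toLp_single, PiLp.toLp_single, LinearIsometryEquiv.piLpCongrRight_single]
    congr 1
    have hτle : τ.val ≤ n := (ZMod.val_lt τ).le
    have key : (Ur ^ (n - τ.val)) ((Ur ^ τ.val) ψ0) = ψ0 := by
      have : Ur ^ (n - τ.val) * Ur ^ τ.val = 1 := by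
        rw [← pow_add, Nat.sub_add_cancel hτle, hUr]
      calc (Ur ^ (n - τ.val)) ((Ur ^ τ.val) ψ0)
          = (Ur ^ (n - τ.val) * Ur ^ τ.val) ψ0 := by
            simp [LinearIsometryEquiv.coe_mul]
        _ = ψ0 := by rw [this]; simp
    simp only [he, LinearIsometryEquiv.trans_apply, key, hW]
end

section
/- Discrete maximal ambiguity: let U_c be the bilateral shift on ℓ²(ℤ) with basis (|τ⟩)_{τ∈ℤ}, and let U_r, U_{r'} be unitaries on separable Hilbert spaces H_r, H_{r'} of equal dimension. Then there is a unitary S : ℓ²(ℤ)⊗H_r → ℓ²(ℤ)⊗H_{r'} such that S(U_c⊗U_r)S⁻¹ = U_c⊗U_{r'}, and for prescribed unit vectors ψ(0), ψ'(0), S(|τ⟩⊗U_rᵗψ(0)) = |τ⟩⊗U_{r'}ᵗψ'(0) for all τ = t ∈ ℤ. -/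
open scoped ComplexConjugate
open InnerProductSpace

noncomputable def smulIsoAux {E : Type*} [NormedAddCommGroup E] [NormedSpace ℂ E]
    (c : ℂ) (hc : ‖c‖ = 1) : E ≃ₗᵢ[ℂ] E :=
  { LinearEquiv.smulOfNeZero ℂ E c (by intro h; simp [h] at hc) with
    norm_map' := fun x => by
      simp [LinearEquiv.smulOfNeZero, LinearEquiv.smulOfUnit, norm_smul, hc] }

@[simp] lemma smulIsoAux_apply {E : Type*} [NormedAddCommGroup E] [NormedSpace ℂ E]
    (c : ℂ) (hc : ‖c‖ = 1) (x : E) : smulIsoAux c hc x = c • x := rfl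

/-- In a complex Hilbert space, any unit vector can be mapped to any other unit vector by a
unitary (composition of a reflection and a phase). -/
lemma exists_lie_unit_map {E : Type*} [NormedAddCommGroup E] [InnerProductSpace ℂ E]
    [CompleteSpace E] {u v : E} (hu : ‖u‖ = 1) (hv : ‖v‖ = 1) :
    ∃ f : E ≃ₗᵢ[ℂ] E, f u = v := by
  classical
  set z : ℂ := inner ℂ u v with hz
  set c : ℂ := if z = 0 then 1 else conj z / ‖z‖ with hc
  have hcnorm : ‖c‖ = 1 := by
    rw [hc]
    split_ifs with h
    · simp
    · rw [norm_div, RCLike.norm_conj, Complex.norm_real, norm_norm,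
        div_self (norm_ne_zero_iff.mpr h)]
  have hcz : c * z = (‖z‖ : ℂ) := by
    rw [hc]
    split_ifs with h
    · simp [h]
    · rw [div_mul_eq_mul_div, mul_comm, Complex.mul_conj]
      have habs : (Complex.normSq z : ℂ) = (‖z‖ : ℂ) ^ 2 := by
        rw [Complex.normSq_eq_norm_sq]
        push_cast
        ring
      rw [habs, sq, mul_div_assoc,
        div_self (by exact_mod_cast norm_ne_zero_iff.mpr h), mul_one]
  set v₁ : E := c • v with hv₁
  have hvv : ‖v₁‖ = 1 := by rw [hv₁, norm_smul, hcnorm, hv, one_mul]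
  have hinner : (inner ℂ u v₁ : ℂ) = (‖z‖ : ℂ) := by
    rw [hv₁, inner_smul_right, ← hz, hcz]
  have huu : (inner ℂ u u : ℂ) = 1 := by simp [inner_self_eq_norm_sq_to_K, hu]
  have hv₁v₁ : (inner ℂ v₁ v₁ : ℂ) = 1 := by simp [inner_self_eq_norm_sq_to_K, hvv]
  have hinner' : (inner ℂ v₁ u : ℂ) = (‖z‖ : ℂ) := by
    rw [← inner_conj_symm, hinner, Complex.conj_ofReal]
  set w : E := u - v₁ with hw
  have h1 : (inner ℂ w u : ℂ) = 1 - ‖z‖ := by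
    rw [hw, inner_sub_left, huu, hinner']
  have h2 : (inner ℂ w w : ℂ) = 2 * (1 - ‖z‖) := by
    rw [hw, inner_sub_sub_self, huu, hv₁v₁, hinner, hinner']
    ring
  have key : Submodule.reflection (ℂ ∙ w)ᗮ u = v₁ := by
    by_cases hw0 : w = 0
    · have : u = v₁ := by rwa [hw, sub_eq_zero] at hw0
      rw [← this]
      apply Submodule.reflection_mem_subspace_eq_self
      rw [hw0]
      simp
    · have hzne : (1 : ℂ) - ‖z‖ ≠ 0 := by
        intro h
        apply hw0
        rw [← inner_self_eq_zero (𝕜 := ℂ), h2, h, mul_zero]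
      rw [Submodule.reflection_orthogonal_apply, Submodule.reflection_singleton_apply,
        ← inner_self_eq_norm_sq_to_K, h1, h2]
      have hdiv : ((1 - (‖z‖:ℂ)) / (2 * (1 - (‖z‖:ℂ)))) = 1 / 2 := by
        rw [div_eq_div_iff (mul_ne_zero two_ne_zero hzne) two_ne_zero]
        ring
      rw [hdiv, two_nsmul, ← add_smul]
      norm_num
      rw [hw]
      abel
  refine ⟨(Submodule.reflection (ℂ ∙ w)ᗮ).trans (smulIsoAux c⁻¹ (by rw [norm_inv, hcnorm]; norm_num)), ?_⟩
  simp only [LinearIsometryEquiv.trans_apply, key, smulIsoAux_apply, hv₁, smul_smul]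
  rw [inv_mul_cancel₀ (by intro h; simp [h] at hcnorm)]
  simp

section lpCongr

variable {ι : Type*} {E F : ι → Type*} [∀ i, NormedAddCommGroup (E i)]
  [∀ i, NormedAddCommGroup (F i)] [∀ i, NormedSpace ℂ (E i)] [∀ i, NormedSpace ℂ (F i)]

lemma memℓp_congr_map (V : ∀ i, E i ≃ₗᵢ[ℂ] F i) {f : ∀ i, E i} (hf : Memℓp f 2) :
    Memℓp (fun i => V i (f i)) 2 := by
  apply memℓp_gen
  have := hf.summable (by norm_num)
  simpa using this

/-- Componentwise application of a family of unitaries defines a unitary on `ℓ²`. -/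
noncomputable def lpCongr (V : ∀ i, E i ≃ₗᵢ[ℂ] F i) : lp E 2 ≃ₗᵢ[ℂ] lp F 2 where
  toFun f := ⟨fun i => V i (f i), memℓp_congr_map V (lp.memℓp f)⟩
  invFun g := ⟨fun i => (V i).symm (g i), memℓp_congr_map (fun i => (V i).symm) (lp.memℓp g)⟩
  map_add' f g := by
    ext i
    simp [lp.coeFn_add]
    rfl
  map_smul' c f := by
    ext i
    simp [lp.coeFn_smul]
  left_inv f := by ext i; simp
  right_inv g := by ext i; simp
  norm_map' f := by
    rw [lp.norm_eq_tsum_rpow (by norm_num), lp.norm_eq_tsum_rpow (by norm_num)]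
    congr 1
    apply tsum_congr
    intro i
    simp

@[simp] lemma lpCongr_apply (V : ∀ i, E i ≃ₗᵢ[ℂ] F i) (f : lp E 2) (i : ι) :
    (lpCongr V f : ∀ i, F i) i = V i ((f : ∀ i, E i) i) := rfl

end lpCongr

/-- discrete maximal ambiguity: let `U_c` be the bilateral shift on `ℓ²(ℤ)`
(so that `ℓ²(ℤ)⊗H_r ≅ ℓ²(ℤ; H_r)` and `U_c⊗U_r` maps `x` to `t ↦ U_r (x (t-1))`), and let
`U_r, U_{r'}` be unitaries on separable Hilbert spaces `H_r, H_{r'}` of equal dimension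
(i.e. unitarily isomorphic).  Then for prescribed unit vectors `ψ(0), ψ'(0)` there is a
unitary `S : ℓ²(ℤ)⊗H_r → ℓ²(ℤ)⊗H_{r'}` with `S (U_c⊗U_r) S⁻¹ = U_c⊗U_{r'}` and
`S(|τ⟩ ⊗ U_r^τ ψ(0)) = |τ⟩ ⊗ U_{r'}^τ ψ'(0)` for all `τ ∈ ℤ`. -/
theorem discrete_maximal_ambiguity
    {Hr Hr' : Type*} [NormedAddCommGroup Hr] [InnerProductSpace ℂ Hr] [CompleteSpace Hr]
    [TopologicalSpace.SeparableSpace Hr]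
    [NormedAddCommGroup Hr'] [InnerProductSpace ℂ Hr'] [CompleteSpace Hr']
    [TopologicalSpace.SeparableSpace Hr']
    (e : Hr ≃ₗᵢ[ℂ] Hr') (Ur : Hr ≃ₗᵢ[ℂ] Hr) (Ur' : Hr' ≃ₗᵢ[ℂ] Hr')
    (ψ0 : Hr) (ψ0' : Hr') (hψ0 : ‖ψ0‖ = 1) (hψ0' : ‖ψ0'‖ = 1) :
    ∃ S : lp (fun _ : ℤ => Hr) 2 ≃ₗᵢ[ℂ] lp (fun _ : ℤ => Hr') 2,
      (∀ x y : lp (fun _ : ℤ => Hr) 2,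
        (∀ t : ℤ, (y : ∀ _ : ℤ, Hr) t = Ur ((x : ∀ _ : ℤ, Hr) (t - 1))) →
        (∀ t : ℤ, (S y : ∀ _ : ℤ, Hr') t = Ur' ((S x : ∀ _ : ℤ, Hr') (t - 1)))) ∧
      (∀ τ : ℤ,
        S (lp.single 2 τ ((Ur ^ τ) ψ0)) = lp.single 2 τ ((Ur' ^ τ) ψ0')) := by
  classical
  obtain ⟨f, hf⟩ := exists_lie_unit_map (u := e ψ0) (v := ψ0') (by simp [hψ0]) hψ0'
  set V0 : Hr ≃ₗᵢ[ℂ] Hr' := e.trans f with hV0def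
  have hV0 : V0 ψ0 = ψ0' := by simp [hV0def, hf]
  set V : ℤ → (Hr ≃ₗᵢ[ℂ] Hr') := fun t => ((Ur ^ t).symm.trans V0).trans (Ur' ^ t) with hVdef
  refine ⟨lpCongr V, ?_, ?_⟩
  · intro x y hxy t
    rw [lpCongr_apply, lpCongr_apply, hxy t]
    show (((Ur ^ t).symm.trans V0).trans (Ur' ^ t)) (Ur ((x : ∀ _ : ℤ, Hr) (t - 1)))
      = Ur' ((((Ur ^ (t-1)).symm.trans V0).trans (Ur' ^ (t-1))) ((x : ∀ _ : ℤ, Hr) (t - 1)))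
    set a : Hr := (x : ∀ _ : ℤ, Hr) (t - 1)
    have hA : (Ur ^ t).symm (Ur a) = (Ur ^ (t - 1)).symm a := by
      have hgrp : (Ur ^ t)⁻¹ * Ur = (Ur ^ (t - 1))⁻¹ := by
        group
      have h1 : (Ur ^ t).symm (Ur a) = ((Ur ^ t)⁻¹ * Ur) a := rfl
      rw [h1, hgrp]
      rfl
    have hB : ∀ b : Hr', Ur' ((Ur' ^ (t - 1)) b) = (Ur' ^ t) b := by
      intro b
      have : Ur' * Ur' ^ (t - 1) = Ur' ^ t := by
        group
      calc Ur' ((Ur' ^ (t - 1)) b) = (Ur' * Ur' ^ (t - 1)) b := rfl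
        _ = (Ur' ^ t) b := by rw [this]
    simp only [LinearIsometryEquiv.trans_apply, hA, hB]
  · intro τ
    apply lp.ext
    funext i
    rw [lpCongr_apply]
    by_cases h : i = τ
    · subst h
      rw [lp.single_apply_self, lp.single_apply_self]
      show (Ur' ^ i) (V0 ((Ur ^ i).symm ((Ur ^ i) ψ0))) = (Ur' ^ i) ψ0'
      rw [LinearIsometryEquiv.symm_apply_apply, hV0]
    · rw [lp.single_apply_ne _ _ _ h, lp.single_apply_ne _ _ _ h, map_zero]
end
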